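/- Let A, B be real n₁ × n₂ matrices, P_T the tangent-space projection at A and P_T^⊥ its orthogonal complement. Then ‖A‖_* − ‖B‖_* ≤ ‖P_T(A − B)‖_* − ‖P_T^⊥(A − B)‖_*. -/

import Mathlib

/-!
The nuclear norm is dual to the operator norm: `tr (Wᵀ X) ≤ ‖X‖_*` for every contraction `W`, with
equality for the polar factor of `X` (the `U Vᵀ` of its singular value decomposition). Put
`M = P_T^⊥(A - B)`, so that `Uᵀ M = 0` and `M V = 0`. Then `W = U Vᵀ - polar(M)` is again a
contraction, since its two summands live on orthogonal row and column spaces; moreover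
`tr (Wᵀ A) ≥ ‖A‖_*` and `tr (Wᵀ M) = -‖M‖_*`. Splitting `A = B + P_T(A - B) + M` and bounding
`tr (Wᵀ B)` and `tr (Wᵀ P_T(A - B))` by nuclear norms gives the inequality.
-/

open Matrix

noncomputable def singVals {m n : ℕ} (A : Matrix (Fin m) (Fin n) ℝ) : Fin n → ℝ :=
  fun i => Real.sqrt (((by simpa [Matrix.conjTranspose_eq_transpose_of_trivial] using Matrix.isHermitian_conjTranspose_mul_self A : (Aᵀ * A).IsHermitian)).eigenvalues i)

noncomputable def nuclearNorm {m n : ℕ} (A : Matrix (Fin m) (Fin n) ℝ) : ℝ :=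
  ∑ i, singVals A i

noncomputable def frobNorm {m n : ℕ} (A : Matrix (Fin m) (Fin n) ℝ) : ℝ :=
  Real.sqrt (∑ i, ∑ j, (A i j) ^ 2)


/-- Projection onto the tangent space of the set of low-rank matrices at a
matrix with reduced SVD given by column-orthonormal `U` and `V`. -/
def PT {n₁ n₂ r : ℕ} (U : Matrix (Fin n₁) (Fin r) ℝ) (V : Matrix (Fin n₂) (Fin r) ℝ)
    (B : Matrix (Fin n₁) (Fin n₂) ℝ) : Matrix (Fin n₁) (Fin n₂) ℝ :=
  U * Uᵀ * B + B * (V * Vᵀ) - U * Uᵀ * B * (V * Vᵀ)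

section GramSpectrum

variable {m n : ℕ} (X : Matrix (Fin m) (Fin n) ℝ)

lemma isHermitian_transpose_mul_self : (Xᵀ * X).IsHermitian := by
  simpa [conjTranspose_eq_transpose_of_trivial] using isHermitian_conjTranspose_mul_self X

noncomputable def gramEigenvalues : Fin n → ℝ := (isHermitian_transpose_mul_self X).eigenvalues

noncomputable def gramEigenbasis : Matrix (Fin n) (Fin n) ℝ :=
  (isHermitian_transpose_mul_self X).eigenvectorUnitary

lemma gramEigenbasis_transpose_mul_self : (gramEigenbasis X)ᵀ * gramEigenbasis X = 1 := by
  simpa [gramEigenbasis, star_eq_conjTranspose, conjTranspose_eq_transpose_of_trivial]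
    using Unitary.coe_star_mul_self (isHermitian_transpose_mul_self X).eigenvectorUnitary

lemma gramEigenbasis_mul_transpose_self : gramEigenbasis X * (gramEigenbasis X)ᵀ = 1 := by
  simpa [gramEigenbasis, star_eq_conjTranspose, conjTranspose_eq_transpose_of_trivial]
    using Unitary.coe_mul_star_self (isHermitian_transpose_mul_self X).eigenvectorUnitary

lemma transpose_mul_self_eq_conj_diagonal :
    Xᵀ * X = gramEigenbasis X * diagonal (gramEigenvalues X) * (gramEigenbasis X)ᵀ := by
  simpa [gramEigenbasis, gramEigenvalues, star_eq_conjTranspose,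
    conjTranspose_eq_transpose_of_trivial] using (isHermitian_transpose_mul_self X).spectral_theorem

lemma nuclearNorm_eq_sum_sqrt_gramEigenvalues :
    nuclearNorm X = ∑ i, √(gramEigenvalues X i) := rfl

lemma conj_diagonal_mul_conj_diagonal (f g : Fin n → ℝ) :
    gramEigenbasis X * diagonal f * (gramEigenbasis X)ᵀ *
        (gramEigenbasis X * diagonal g * (gramEigenbasis X)ᵀ) =
      gramEigenbasis X * diagonal (f * g) * (gramEigenbasis X)ᵀ := by
  calc _ = gramEigenbasis X * diagonal f * ((gramEigenbasis X)ᵀ * gramEigenbasis X) *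
        diagonal g * (gramEigenbasis X)ᵀ := by simp only [Matrix.mul_assoc]
    _ = _ := by
      rw [gramEigenbasis_transpose_mul_self, Matrix.mul_one, Matrix.mul_assoc _ (diagonal f),
        diagonal_mul_diagonal]; rfl

lemma transpose_conj_diagonal (f : Fin n → ℝ) :
    (gramEigenbasis X * diagonal f * (gramEigenbasis X)ᵀ)ᵀ =
      gramEigenbasis X * diagonal f * (gramEigenbasis X)ᵀ := by
  simp only [transpose_mul, transpose_transpose, diagonal_transpose, Matrix.mul_assoc]

lemma one_sub_conj_diagonal (f : Fin n → ℝ) :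
    1 - gramEigenbasis X * diagonal f * (gramEigenbasis X)ᵀ =
      gramEigenbasis X * diagonal (fun i => 1 - f i) * (gramEigenbasis X)ᵀ := by
  rw [← diagonal_sub, diagonal_one, Matrix.mul_sub, Matrix.sub_mul, Matrix.mul_one,
    gramEigenbasis_mul_transpose_self]

lemma trace_conj_diagonal (f : Fin n → ℝ) :
    trace (gramEigenbasis X * diagonal f * (gramEigenbasis X)ᵀ) = ∑ i, f i := by
  rw [trace_mul_comm, ← Matrix.mul_assoc, gramEigenbasis_transpose_mul_self, Matrix.one_mul,
    trace_diagonal]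

lemma mul_gramEigenbasis_transpose_mul_self :
    (X * gramEigenbasis X)ᵀ * (X * gramEigenbasis X) = diagonal (gramEigenvalues X) := by
  calc _ = (gramEigenbasis X)ᵀ * (Xᵀ * X) * gramEigenbasis X := by
        simp only [transpose_mul, Matrix.mul_assoc]
    _ = _ := by
      rw [transpose_mul_self_eq_conj_diagonal]
      simp only [← Matrix.mul_assoc, gramEigenbasis_transpose_mul_self, Matrix.one_mul]
      rw [Matrix.mul_assoc, gramEigenbasis_transpose_mul_self, Matrix.mul_one]

end GramSpectrum

section Contraction

variable {ι κ : Type*} [Fintype ι] [Fintype κ] [DecidableEq κ]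

/-- `‖W‖₂ ≤ 1`, stated as `Wᵀ W ≤ 1` in the Loewner order. -/
def IsContraction (W : Matrix ι κ ℝ) : Prop := (1 - Wᵀ * W).PosSemidef

namespace IsContraction

variable {W : Matrix ι κ ℝ}

lemma dotProduct_mulVec_self_le (hW : IsContraction W) (v : κ → ℝ) :
    (W *ᵥ v) ⬝ᵥ (W *ᵥ v) ≤ v ⬝ᵥ v := by
  have h := hW.dotProduct_mulVec_nonneg v
  rw [star_trivial, sub_mulVec, one_mulVec, dotProduct_sub, ← mulVec_mulVec, dotProduct_mulVec,
    vecMul_transpose] at h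
  linarith

lemma dotProduct_mulVec_le (hW : IsContraction W) (x : κ → ℝ) (y : ι → ℝ) :
    (W *ᵥ x) ⬝ᵥ y ≤ √(x ⬝ᵥ x) * √(y ⬝ᵥ y) :=
  calc (W *ᵥ x) ⬝ᵥ y ≤ √((W *ᵥ x) ⬝ᵥ (W *ᵥ x)) * √(y ⬝ᵥ y) := by
        simpa only [dotProduct, ← pow_two] using
          Real.sum_mul_le_sqrt_mul_sqrt Finset.univ (W *ᵥ x) y
    _ ≤ √(x ⬝ᵥ x) * √(y ⬝ᵥ y) := by gcongr; exact hW.dotProduct_mulVec_self_le x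

lemma trace_transpose_mul_mul_transpose_le {k : Type*} [Fintype k] (hW : IsContraction W)
    (Y : Matrix ι k ℝ) (Z : Matrix κ k ℝ) :
    trace (Wᵀ * (Y * Zᵀ)) ≤ ∑ i, √((Zᵀ * Z) i i) * √((Yᵀ * Y) i i) := by
  have hcol : ∀ i, ((W * Z)ᵀ * Y) i i = (W *ᵥ Zᵀ i) ⬝ᵥ Yᵀ i := fun i => by
    simp only [mul_apply, transpose_apply, mulVec, dotProduct]
  calc trace (Wᵀ * (Y * Zᵀ)) = trace ((W * Z)ᵀ * Y) := by
        rw [← Matrix.mul_assoc, trace_mul_comm, transpose_mul, Matrix.mul_assoc]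
    _ ≤ _ := Finset.sum_le_sum fun i _ => (hcol i).trans_le (hW.dotProduct_mulVec_le _ _)

end IsContraction

lemma isContraction_mul_transpose_sub {k : Type*} [Fintype k] [DecidableEq k]
    {U : Matrix ι k ℝ} {V : Matrix κ k ℝ} {W : Matrix ι κ ℝ} (hU : Uᵀ * U = 1) (hV : Vᵀ * V = 1)
    (hUW : Uᵀ * W = 0) (hWV : W * V = 0) (hW : IsContraction W) :
    IsContraction (U * Vᵀ - W) := by
  have hWU : Wᵀ * U = 0 := by rw [← transpose_transpose U, ← transpose_mul, hUW, transpose_zero]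
  have gram : (U * Vᵀ - W)ᵀ * (U * Vᵀ - W) = V * Vᵀ + Wᵀ * W := by
    simp only [transpose_sub, transpose_mul, transpose_transpose, Matrix.sub_mul, Matrix.mul_sub]
    rw [Matrix.mul_assoc V, ← Matrix.mul_assoc Uᵀ, hU, Matrix.one_mul, Matrix.mul_assoc V, hUW,
      Matrix.mul_zero, ← Matrix.mul_assoc, hWU, Matrix.zero_mul]
    abel
  obtain ⟨R, hRdef⟩ : ∃ R : Matrix κ κ ℝ, R = 1 - V * Vᵀ := ⟨_, rfl⟩
  have hR : Rᵀ = R := by simp [hRdef]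
  have hRR : Rᵀ * R = R := by
    rw [hR, hRdef]
    simp only [Matrix.sub_mul, Matrix.mul_sub, Matrix.one_mul, Matrix.mul_one]
    rw [Matrix.mul_assoc, ← Matrix.mul_assoc Vᵀ, hV, Matrix.one_mul, sub_self, sub_zero]
  have hWR : W * R = W := by
    rw [hRdef, Matrix.mul_sub, Matrix.mul_one, ← Matrix.mul_assoc, hWV, Matrix.zero_mul, sub_zero]
  have key : 1 - (U * Vᵀ - W)ᵀ * (U * Vᵀ - W) = Rᴴ * (1 - Wᵀ * W) * R :=
    calc 1 - (U * Vᵀ - W)ᵀ * (U * Vᵀ - W) = R - Wᵀ * W := by rw [gram, hRdef]; abel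
      _ = Rᵀ * R - (W * R)ᵀ * (W * R) := by rw [hRR, hWR]
      _ = Rᴴ * (1 - Wᵀ * W) * R := by
        simp only [conjTranspose_eq_transpose_of_trivial, transpose_mul, Matrix.mul_sub,
          Matrix.sub_mul, Matrix.mul_one, Matrix.mul_assoc]
  unfold IsContraction
  rw [key]
  exact hW.conjTranspose_mul_mul_same R

end Contraction

section PolarFactor

variable {m n : ℕ} (X : Matrix (Fin m) (Fin n) ℝ)

/-- The partial isometry `U Vᵀ` of a singular value decomposition `X = U Σ Vᵀ`. Since `(√0)⁻¹ = 0`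
in Lean, it vanishes on the kernel of `X`. -/
noncomputable def polarFactor : Matrix (Fin m) (Fin n) ℝ :=
  X * (gramEigenbasis X * diagonal (fun i => (√(gramEigenvalues X i))⁻¹) * (gramEigenbasis X)ᵀ)

lemma transpose_polarFactor_mul_self :
    (polarFactor X)ᵀ * X =
      gramEigenbasis X * diagonal (fun i => √(gramEigenvalues X i)) * (gramEigenbasis X)ᵀ := by
  rw [polarFactor, transpose_mul, transpose_conj_diagonal, Matrix.mul_assoc,
    transpose_mul_self_eq_conj_diagonal, conj_diagonal_mul_conj_diagonal]
  congr 3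
  funext i
  simp only [Pi.mul_apply, inv_mul_eq_div, Real.div_sqrt]

lemma trace_transpose_polarFactor_mul_self : trace ((polarFactor X)ᵀ * X) = nuclearNorm X := by
  rw [transpose_polarFactor_mul_self, trace_conj_diagonal, nuclearNorm_eq_sum_sqrt_gramEigenvalues]

lemma isContraction_polarFactor : IsContraction (polarFactor X) := by
  have gram : (polarFactor X)ᵀ * polarFactor X = gramEigenbasis X *
      diagonal (fun i => √(gramEigenvalues X i) * (√(gramEigenvalues X i))⁻¹) *
        (gramEigenbasis X)ᵀ := by
    rw [polarFactor, ← Matrix.mul_assoc, ← polarFactor, transpose_polarFactor_mul_self,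
      conj_diagonal_mul_conj_diagonal]
    rfl
  have key : 1 - (polarFactor X)ᵀ * polarFactor X = gramEigenbasis X *
      diagonal (fun i => 1 - √(gramEigenvalues X i) * (√(gramEigenvalues X i))⁻¹) *
        (gramEigenbasis X)ᵀ := by
    rw [gram, one_sub_conj_diagonal]
  unfold IsContraction
  rw [key, ← conjTranspose_eq_transpose_of_trivial]
  exact (PosSemidef.diagonal fun _ => sub_nonneg.2 mul_inv_le_one).mul_mul_conjTranspose_same _

lemma polarFactor_mul_eq_zero {k : ℕ} {V : Matrix (Fin n) (Fin k) ℝ} (hXV : X * V = 0) :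
    polarFactor X * V = 0 := by
  have hS : gramEigenbasis X * diagonal (fun i => (√(gramEigenvalues X i))⁻¹) *
      (gramEigenbasis X)ᵀ = gramEigenbasis X *
        diagonal (fun i => (√(gramEigenvalues X i))⁻¹ * (gramEigenvalues X i)⁻¹) *
          (gramEigenbasis X)ᵀ * (Xᵀ * X) := by
    rw [transpose_mul_self_eq_conj_diagonal, conj_diagonal_mul_conj_diagonal]
    congr 3
    funext i
    by_cases h : gramEigenvalues X i = 0 <;> simp [h]
  rw [polarFactor, hS]
  simp only [Matrix.mul_assoc, hXV, Matrix.mul_zero]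

end PolarFactor

section NuclearNormDuality

variable {m n : ℕ}

lemma IsContraction.trace_transpose_mul_le_nuclearNorm {W : Matrix (Fin m) (Fin n) ℝ}
    (hW : IsContraction W) (X : Matrix (Fin m) (Fin n) ℝ) : trace (Wᵀ * X) ≤ nuclearNorm X := by
  calc trace (Wᵀ * X) = trace (Wᵀ * (X * gramEigenbasis X * (gramEigenbasis X)ᵀ)) := by
        rw [Matrix.mul_assoc X, gramEigenbasis_mul_transpose_self, Matrix.mul_one]
    _ ≤ ∑ i, √(((gramEigenbasis X)ᵀ * gramEigenbasis X) i i) *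
          √(((X * gramEigenbasis X)ᵀ * (X * gramEigenbasis X)) i i) :=
        hW.trace_transpose_mul_mul_transpose_le _ _
    _ = nuclearNorm X := by
        rw [gramEigenbasis_transpose_mul_self, mul_gramEigenbasis_transpose_mul_self]
        simp [nuclearNorm_eq_sum_sqrt_gramEigenvalues]

lemma nuclearNorm_mul_diagonal_mul_transpose_le {r : ℕ} {U : Matrix (Fin m) (Fin r) ℝ}
    {V : Matrix (Fin n) (Fin r) ℝ} {σ : Fin r → ℝ} (hU : Uᵀ * U = 1) (hV : Vᵀ * V = 1)
    (hσ : ∀ i, 0 ≤ σ i) : nuclearNorm (U * diagonal σ * Vᵀ) ≤ ∑ i, σ i := by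
  set A := U * diagonal σ * Vᵀ
  have hY : (U * diagonal σ)ᵀ * (U * diagonal σ) = diagonal (σ * σ) := by
    rw [transpose_mul, diagonal_transpose, Matrix.mul_assoc, ← Matrix.mul_assoc Uᵀ, hU,
      Matrix.one_mul, diagonal_mul_diagonal]
    rfl
  calc nuclearNorm A = trace ((polarFactor A)ᵀ * A) := (trace_transpose_polarFactor_mul_self A).symm
    _ ≤ ∑ i, √((Vᵀ * V) i i) * √(((U * diagonal σ)ᵀ * (U * diagonal σ)) i i) :=
        (isContraction_polarFactor A).trace_transpose_mul_mul_transpose_le _ _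
    _ = ∑ i, σ i := by
        rw [hV, hY]
        exact Finset.sum_congr rfl fun i _ => by simp [Real.sqrt_mul_self (hσ i)]

end NuclearNormDuality

section TangentSpace

variable {n₁ n₂ r : ℕ} {U : Matrix (Fin n₁) (Fin r) ℝ} {V : Matrix (Fin n₂) (Fin r) ℝ}

lemma transpose_mul_sub_PT (hU : Uᵀ * U = 1) (D : Matrix (Fin n₁) (Fin n₂) ℝ) :
    Uᵀ * (D - PT U V D) = 0 := by
  simp only [PT, Matrix.mul_sub, Matrix.mul_add, ← Matrix.mul_assoc, hU, Matrix.one_mul]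
  abel

lemma sub_PT_mul (hV : Vᵀ * V = 1) (D : Matrix (Fin n₁) (Fin n₂) ℝ) :
    (D - PT U V D) * V = 0 := by
  simp only [PT, Matrix.sub_mul, Matrix.add_mul, Matrix.mul_assoc, hV, Matrix.mul_one]
  abel

/-- The witness is `U Vᵀ - polarFactor M`. -/
lemma exists_isContraction_nuclearNorm_le_trace {σ : Fin r → ℝ} (hσ : ∀ i, 0 ≤ σ i)
    (hU : Uᵀ * U = 1) (hV : Vᵀ * V = 1) {M : Matrix (Fin n₁) (Fin n₂) ℝ}
    (hUM : Uᵀ * M = 0) (hMV : M * V = 0) :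
    ∃ W : Matrix (Fin n₁) (Fin n₂) ℝ, IsContraction W ∧
      nuclearNorm (U * diagonal σ * Vᵀ) ≤ trace (Wᵀ * (U * diagonal σ * Vᵀ)) ∧
      trace (Wᵀ * M) = -nuclearNorm M := by
  have hUP : Uᵀ * polarFactor M = 0 := by rw [polarFactor, ← Matrix.mul_assoc, hUM, Matrix.zero_mul]
  have hPU : (polarFactor M)ᵀ * U = 0 := by
    rw [← transpose_transpose U, ← transpose_mul, hUP, transpose_zero]
  refine ⟨U * Vᵀ - polarFactor M, isContraction_mul_transpose_sub hU hV hUP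
    (polarFactor_mul_eq_zero M hMV) (isContraction_polarFactor M), ?_, ?_⟩
  · calc nuclearNorm (U * diagonal σ * Vᵀ) ≤ ∑ i, σ i :=
          nuclearNorm_mul_diagonal_mul_transpose_le hU hV hσ
      _ = trace (V * diagonal σ * Vᵀ) := by
          rw [trace_mul_comm, ← Matrix.mul_assoc, hV, Matrix.one_mul, trace_diagonal]
      _ = _ := by
          simp only [Matrix.transpose_sub, Matrix.sub_mul, transpose_mul, transpose_transpose,
            Matrix.mul_assoc]
          rw [← Matrix.mul_assoc Uᵀ U, hU, Matrix.one_mul, ← Matrix.mul_assoc _ U, hPU,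
            Matrix.zero_mul, sub_zero]
  · rw [Matrix.transpose_sub, Matrix.sub_mul, trace_sub, trace_transpose_polarFactor_mul_self,
      transpose_mul, transpose_transpose, Matrix.mul_assoc, hUM, Matrix.mul_zero, trace_zero,
      zero_sub]

end TangentSpace

/-- `‖A‖_* − ‖B‖_* ≤ ‖P_T(A−B)‖_* − ‖P_T^⊥(A−B)‖_*`. -/
theorem stmt15 {n₁ n₂ r : ℕ} (A : Matrix (Fin n₁) (Fin n₂) ℝ)
    (U : Matrix (Fin n₁) (Fin r) ℝ) (V : Matrix (Fin n₂) (Fin r) ℝ)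
    (σ : Fin r → ℝ) (hσ : ∀ i, 0 < σ i)
    (hU : Uᵀ * U = 1) (hV : Vᵀ * V = 1)
    (hA : A = U * Matrix.diagonal σ * Vᵀ)
    (B : Matrix (Fin n₁) (Fin n₂) ℝ) :
    nuclearNorm A - nuclearNorm B ≤
      nuclearNorm (PT U V (A - B)) - nuclearNorm ((A - B) - PT U V (A - B)) := by
  set D := A - B with hD
  obtain ⟨W, hW, hA_le, hWM⟩ := exists_isContraction_nuclearNorm_le_trace (fun i => (hσ i).le)
    hU hV (transpose_mul_sub_PT hU D) (sub_PT_mul hV D)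
  rw [← hA] at hA_le
  have hsplit : trace (Wᵀ * A) =
      trace (Wᵀ * B) + trace (Wᵀ * PT U V D) + trace (Wᵀ * (D - PT U V D)) := by
    rw [← trace_add, ← trace_add, ← Matrix.mul_add, ← Matrix.mul_add, add_assoc, add_sub_cancel, hD, add_sub_cancel]
  linarith [hW.trace_transpose_mul_le_nuclearNorm B,
    hW.trace_transpose_mul_le_nuclearNorm (PT U V D)]
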